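/- arXiv:1012.4337 — 4 statements merged into one kernel-verified Lean document; each statement's English description precedes it below -/
import Mathlib

section
/- Let G be a group with elements τ₁, τ₂ such that τ₁² = τ₂², τ₁ has order 2^{n+1}, and τ₂τ₁ = τ₁^{2^n + 1}τ₂. Then the element ν = τ₁^{2^{n−1}c − 1}τ₂, where c is odd and 2^{n−1}c = 2a + 2, has order 2. -/
/-!
Put `k = 2^(n-1) c - 1 = 2a + 1` and `ν = τ₁^k τ₂`. Moving `τ₂` past `τ₁^k` multiplies the exponent
by `2^n + 1`, and `τ₂² = τ₁²`, so `ν² = τ₁^(k (2^n + 2) + 2) = τ₁^(2^n (k + c))`, which is trivial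
because `k + c` is even. If `ν` were trivial, `τ₂ = τ₁^(-k)` would commute with `τ₁`, forcing
`τ₁^(2^n) = 1`, against `orderOf τ₁ = 2^(n+1)`.
-/

theorem sq_pow_mul_of_semiconjBy {M : Type*} [Monoid M] {a b : M} {m : ℕ}
    (hrel : SemiconjBy b a (a ^ m)) (hsq : a ^ 2 = b ^ 2) (k : ℕ) :
    (a ^ k * b) ^ 2 = a ^ (k + k * m + 2) := by
  have hb : b * a ^ k = a ^ (k * m) * b := by
    rw [mul_comm k m, pow_mul]
    exact hrel.pow_right k
  calc (a ^ k * b) ^ 2 = a ^ k * (b * a ^ k) * b := by rw [sq, mul_assoc, mul_assoc, mul_assoc]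
    _ = a ^ k * a ^ (k * m) * b ^ 2 := by rw [hb, sq, mul_assoc, mul_assoc, mul_assoc]
    _ = a ^ (k + k * m + 2) := by rw [← hsq, ← pow_add, ← pow_add]

theorem pow_mul_ne_one_of_semiconjBy {G : Type*} [Group G] {a b : G} {m : ℕ}
    (hrel : SemiconjBy b a (a ^ (m + 1))) (hm : a ^ m ≠ 1) (k : ℕ) : a ^ k * b ≠ 1 := by
  intro h
  have hcomm : Commute a b := by
    rw [eq_inv_of_mul_eq_one_right h]
    exact ((Commute.refl a).pow_right k).inv_right
  have hfix : a ^ m * a = a := by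
    rw [← pow_succ]
    exact mul_right_cancel (hrel.symm.trans hcomm.symm.eq)
  exact hm (mul_eq_right.mp hfix)

theorem two_pow_succ_dvd_of_odd {n a c : ℕ} (hn : 1 ≤ n) (hc : Odd c)
    (hca : 2 ^ (n - 1) * c = 2 * a + 2) :
    2 ^ (n + 1) ∣ (2 ^ (n - 1) * c - 1) + (2 ^ (n - 1) * c - 1) * (2 ^ n + 1) + 2 := by
  obtain ⟨n, rfl⟩ := Nat.exists_eq_add_of_le' hn
  obtain ⟨t, rfl⟩ := hc
  rw [Nat.add_sub_cancel] at hca ⊢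
  rw [show 2 ^ n * (2 * t + 1) - 1 = 2 * a + 1 by omega]
  refine ⟨a + t + 1, ?_⟩
  rw [pow_succ, pow_succ, pow_succ]
  linear_combination 2 * hca.symm

theorem stmt_2 {G : Type*} [Group G] (n a c : ℕ) (hn : 1 ≤ n)
    (τ₁ τ₂ : G)
    (hord : orderOf τ₁ = 2 ^ (n + 1))
    (hsq : τ₁ ^ 2 = τ₂ ^ 2)
    (hrel : τ₂ * τ₁ = τ₁ ^ (2 ^ n + 1) * τ₂)
    (hc : Odd c) (hca : 2 ^ (n - 1) * c = 2 * a + 2) :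
    orderOf (τ₁ ^ (2 ^ (n - 1) * c - 1) * τ₂) = 2 := by
  apply orderOf_eq_prime
  · rw [sq_pow_mul_of_semiconjBy hrel hsq, ← orderOf_dvd_iff_pow_eq_one, hord]
    exact two_pow_succ_dvd_of_odd hn hc hca
  · refine pow_mul_ne_one_of_semiconjBy hrel (pow_ne_one_of_lt_orderOf (by positivity) ?_) _
    rw [hord]
    exact Nat.pow_lt_pow_right (by norm_num) (by omega)
end

section
/- The group with presentation ⟨D₁, D₂, D₃, D₄ : D₁^{2^{n+1}} = D₂^{2^{n+1}} = D₃^{2^n} = D₄² = 1, D₁D₂D₃D₄ = 1, D₁² = D₂², D₃ = D₁^{c·2^{n−1} − 2}⟩, where c is even and c·2^{n−1} = 2a+2, is abelian and isomorphic to ℤ/2^{n+1}ℤ × ℤ/2ℤ. -/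
/-!
Write `x = D₁`, `y = D₂`. The relations give `D₃ = x^(2a)` and `D₄ = (x y x^(2a))⁻¹`, so `x` and
`y` generate. As `c` is even, `2^(n+1) ∣ 4a + 4`, hence `x^(4a+4) = 1`; and `x² = y²` commutes
with `y`, so `D₄² = 1` becomes `(x y)² = x⁴ = x² y²`, i.e. `x y = y x`. Then `x` and `x⁻¹ y` are
commuting elements of orders dividing `2^(n+1)` and `2`, which defines a homomorphism from
`ℤ/2^(n+1) × ℤ/2` inverse to `D₁ ↦ (1, 0)`, `D₂ ↦ (1, 1)`.
-/

open Multiplicative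

theorem pow_eq_one_of_dvd {M : Type*} [Monoid M] {x : M} {m k : ℕ} (hx : x ^ m = 1)
    (h : m ∣ k) : x ^ k = 1 := by
  obtain ⟨t, rfl⟩ := h
  rw [pow_mul, hx, one_pow]

theorem commute_of_sq_eq_sq {G : Type*} [Group G] {x y : G} {a : ℕ} (hsq : x ^ 2 = y ^ 2)
    (hx : x ^ (4 * a + 4) = 1) (h : (x * y * x ^ (2 * a)) ^ 2 = 1) : Commute x y := by
  have hy : x ^ (2 * a) * y = y * x ^ (2 * a) := by
    rw [pow_mul, hsq]; exact (((Commute.refl y).pow_left 2).pow_left a).eq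
  simp only [sq] at h hsq
  have hxyxy : x * y * (x * y) * x ^ (4 * a) = x * x * x * x * x ^ (4 * a) := by
    calc x * y * (x * y) * x ^ (4 * a) = x * y * x * (y * x ^ (2 * a)) * x ^ (2 * a) := by group
      _ = x * y * x ^ (2 * a) * (x * y * x ^ (2 * a)) := by rw [← hy]; group
      _ = x * x * x * x * x ^ (4 * a) := by rw [h, hx.symm]; group
  have hyx : x * (y * x) * y = x * (x * y) * y := by
    calc x * (y * x) * y = x * x * x * x := by rw [← mul_right_cancel hxyxy]; group
      _ = x * x * (y * y) := by rw [← hsq]; group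
      _ = x * (x * y) * y := by group
  exact (mul_left_cancel (mul_right_cancel hyx)).symm

section ZModProd

variable {m k : ℕ} [NeZero m] [NeZero k]

def Commute.zmodProdHom {G : Type*} [Group G] {u v : G} (huv : Commute u v) (hu : u ^ m = 1)
    (hv : v ^ k = 1) : Multiplicative (ZMod m × ZMod k) →* G where
  toFun g := u ^ g.toAdd.1.val * v ^ g.toAdd.2.val
  map_one' := by simp
  map_mul' g h := by
    simp only [toAdd_mul, Prod.fst_add, Prod.snd_add, ZMod.val_add, ← pow_eq_pow_mod _ hu,
      ← pow_eq_pow_mod _ hv, pow_add]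
    exact (huv.pow_pow _ _).mul_mul_mul_comm _ _

@[simp]
theorem Commute.zmodProdHom_ofAdd_one_zero {G : Type*} [Group G] {u v : G} (huv : Commute u v)
    (hu : u ^ m = 1) (hv : v ^ k = 1) : huv.zmodProdHom hu hv (ofAdd (1, 0)) = u := by
  simp [Commute.zmodProdHom, ZMod.val_one_eq_one_mod, ← pow_eq_pow_mod _ hu]

@[simp]
theorem Commute.zmodProdHom_ofAdd_zero_one {G : Type*} [Group G] {u v : G} (huv : Commute u v)
    (hu : u ^ m = 1) (hv : v ^ k = 1) : huv.zmodProdHom hu hv (ofAdd (0, 1)) = v := by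
  simp [Commute.zmodProdHom, ZMod.val_one_eq_one_mod, ← pow_eq_pow_mod _ hv]

theorem Multiplicative.zmodProd_hom_ext {H : Type*} [Monoid H]
    {f g : Multiplicative (ZMod m × ZMod k) →* H}
    (h₁ : f (ofAdd (1, 0)) = g (ofAdd (1, 0))) (h₂ : f (ofAdd (0, 1)) = g (ofAdd (0, 1))) :
    f = g := by
  refine MonoidHom.ext fun x => ?_
  have hx : x = ofAdd (1, 0) ^ x.toAdd.1.val * ofAdd (0, 1) ^ x.toAdd.2.val := by
    rw [← ofAdd_nsmul, ← ofAdd_nsmul, ← ofAdd_add]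
    simp
  rw [hx, map_mul, map_mul, map_pow, map_pow, map_pow, map_pow, h₁, h₂]

end ZModProd

theorem Multiplicative.ofAdd_one_zero_pow (m k : ℕ) :
    (ofAdd (1, 0) : Multiplicative (ZMod m × ZMod k)) ^ m = 1 := by
  rw [← ofAdd_nsmul, ofAdd_eq_one]; simp

theorem Multiplicative.ofAdd_zero_one_pow (m k : ℕ) :
    (ofAdd (0, 1) : Multiplicative (ZMod m × ZMod k)) ^ k = 1 := by
  rw [← ofAdd_nsmul, ofAdd_eq_one]; simp

open FreeGroup in
/-- `of i` stands for `D_(i+1)`, and `e` for the exponent `c * 2 ^ (n - 1) - 2` of the last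
relator. -/
def DGroup.rels (n e : ℕ) : Set (FreeGroup (Fin 4)) :=
  { of 0 ^ (2 ^ (n + 1)), of 1 ^ (2 ^ (n + 1)), of 2 ^ (2 ^ n), of 3 ^ 2,
    of 0 * of 1 * of 2 * of 3, of 0 ^ 2 * (of 1 ^ 2)⁻¹, (of 2)⁻¹ * of 0 ^ e }

abbrev DGroup (n e : ℕ) : Type := PresentedGroup (DGroup.rels n e)

namespace DGroup

variable {n e a : ℕ}

theorem lift_eq_one {T : Type*} [CommGroup T] {X V : T} (hX : X ^ 2 ^ (n + 1) = 1)
    (hV : V ^ 2 = 1) (hdvd : 2 ^ (n + 1) ∣ 4 * a + 4) :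
    ∀ r ∈ rels n (2 * a),
      FreeGroup.lift ![X, X * V, X ^ (2 * a), (X * (X * V) * X ^ (2 * a))⁻¹] r = 1 := by
  rintro r (rfl | rfl | rfl | rfl | rfl | rfl | rfl) <;>
    simp only [map_pow, map_mul, map_inv, FreeGroup.lift_apply_of, Matrix.cons_val]
  · exact hX
  · rw [mul_pow, hX, pow_succ', pow_mul, hV, one_pow, one_mul]
  · rw [← pow_mul, mul_right_comm, ← pow_succ', pow_mul, hX, one_pow]
  · rw [inv_pow, inv_eq_one, mul_pow, mul_pow, mul_pow, hV, mul_one, ← pow_mul, ← pow_add,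
      ← pow_add, show 2 + 2 + 2 * a * 2 = 4 * a + 4 by ring]
    exact pow_eq_one_of_dvd hX hdvd
  · exact mul_inv_cancel _
  · rw [mul_pow, hV, mul_one, mul_inv_cancel]
  · exact inv_mul_cancel _

theorem of_zero_pow : (.of 0 : DGroup n e) ^ 2 ^ (n + 1) = 1 :=
  PresentedGroup.one_of_mem (by simp [rels])

theorem of_zero_sq : (.of 0 : DGroup n e) ^ 2 = .of 1 ^ 2 :=
  PresentedGroup.mk_eq_mk_of_mul_inv_mem (by simp [rels])

theorem of_two : (.of 2 : DGroup n e) = .of 0 ^ e :=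
  PresentedGroup.mk_eq_mk_of_inv_mul_mem (by simp [rels])

theorem of_three : (.of 3 : DGroup n e) = (.of 0 * .of 1 * .of 0 ^ e)⁻¹ := by
  rw [← of_two]
  exact eq_inv_of_mul_eq_one_right (PresentedGroup.one_of_mem (by simp [rels]))

theorem of_three_sq : (.of 3 : DGroup n e) ^ 2 = 1 :=
  PresentedGroup.one_of_mem (by simp [rels])

theorem commute_of_zero_of_one (hdvd : 2 ^ (n + 1) ∣ 4 * a + 4) :
    Commute (.of 0 : DGroup n (2 * a)) (.of 1) := by
  refine commute_of_sq_eq_sq (a := a) of_zero_sq ?_ ?_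
  · exact pow_eq_one_of_dvd of_zero_pow hdvd
  · rw [← inv_eq_one, ← inv_pow, ← of_three, of_three_sq]

theorem hom_ext {G : Type*} [Group G] {f g : DGroup n e →* G} (h₀ : f (.of 0) = g (.of 0))
    (h₁ : f (.of 1) = g (.of 1)) : f = g := by
  refine PresentedGroup.ext fun i => ?_
  fin_cases i
  · exact h₀
  · exact h₁
  · simp [of_two, h₀]
  · simp [of_three, h₀, h₁]

def toZModProd (hdvd : 2 ^ (n + 1) ∣ 4 * a + 4) :
    DGroup n (2 * a) →* Multiplicative (ZMod (2 ^ (n + 1)) × ZMod 2) :=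
  PresentedGroup.toGroup <| lift_eq_one (ofAdd_one_zero_pow _ _) (ofAdd_zero_one_pow _ _) hdvd

@[simp]
theorem toZModProd_of_zero (hdvd : 2 ^ (n + 1) ∣ 4 * a + 4) :
    toZModProd hdvd (.of 0) = ofAdd (1, 0) :=
  PresentedGroup.toGroup.of _

@[simp]
theorem toZModProd_of_one (hdvd : 2 ^ (n + 1) ∣ 4 * a + 4) :
    toZModProd hdvd (.of 1) = ofAdd (1, 0) * ofAdd (0, 1) :=
  PresentedGroup.toGroup.of _

end DGroup

theorem stmt_3_general (n a c : ℕ) (hc : Even c)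
    (hca : c * 2 ^ (n - 1) = 2 * a + 2)
    (rels : Set (FreeGroup (Fin 4)))
    (hrels : rels =
      { FreeGroup.of 0 ^ (2 ^ (n + 1)),
        FreeGroup.of 1 ^ (2 ^ (n + 1)),
        FreeGroup.of 2 ^ (2 ^ n),
        FreeGroup.of 3 ^ 2,
        FreeGroup.of 0 * FreeGroup.of 1 * FreeGroup.of 2 * FreeGroup.of 3,
        FreeGroup.of 0 ^ 2 * (FreeGroup.of 1 ^ 2)⁻¹,
        (FreeGroup.of 2)⁻¹ * FreeGroup.of 0 ^ (c * 2 ^ (n - 1) - 2) }) :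
    (∀ x y : PresentedGroup rels, x * y = y * x) ∧
      Nonempty (PresentedGroup rels ≃* Multiplicative (ZMod (2 ^ (n + 1)) × ZMod 2)) := by
  have hdvd : 2 ^ (n + 1) ∣ 4 * a + 4 := by
    obtain ⟨c, rfl⟩ := hc
    rcases n with _ | n
    · exact ⟨2 * a + 2, by ring⟩
    · refine ⟨c, ?_⟩
      rw [show 4 * a + 4 = 2 * (2 * a + 2) by ring, ← hca, Nat.add_sub_cancel]
      ring
  obtain rfl : rels = DGroup.rels n (2 * a) := by rw [hrels, hca, Nat.add_sub_cancel]; rfl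
  have hxy : Commute (.of 0 : DGroup n (2 * a)) (.of 1) := DGroup.commute_of_zero_of_one hdvd
  have hv : ((.of 0)⁻¹ * .of 1 : DGroup n (2 * a)) ^ 2 = 1 := by
    rw [hxy.inv_left.mul_pow, inv_pow, DGroup.of_zero_sq, inv_mul_cancel]
  let ψ := ((Commute.refl _).inv_right.mul_right hxy).zmodProdHom DGroup.of_zero_pow hv
  have hψφ : ψ.comp (DGroup.toZModProd hdvd) = .id _ :=
    DGroup.hom_ext (by simp [ψ]) (by simp [ψ])
  have hφψ : (DGroup.toZModProd hdvd).comp ψ = .id _ :=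
    zmodProd_hom_ext (by simp [ψ]) (by simp [ψ])
  let e := MonoidHom.toMulEquiv _ _ hψφ hφψ
  exact ⟨fun g h => e.injective (by rw [map_mul, map_mul, mul_comm]), ⟨e⟩⟩

theorem stmt_3 (n a c : ℕ) (hn : 1 ≤ n) (hc : Even c)
    (hca : c * 2 ^ (n - 1) = 2 * a + 2)
    (rels : Set (FreeGroup (Fin 4)))
    (hrels : rels =
      { FreeGroup.of 0 ^ (2 ^ (n + 1)),
        FreeGroup.of 1 ^ (2 ^ (n + 1)),
        FreeGroup.of 2 ^ (2 ^ n),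
        FreeGroup.of 3 ^ 2,
        FreeGroup.of 0 * FreeGroup.of 1 * FreeGroup.of 2 * FreeGroup.of 3,
        FreeGroup.of 0 ^ 2 * (FreeGroup.of 1 ^ 2)⁻¹,
        (FreeGroup.of 2)⁻¹ * FreeGroup.of 0 ^ (c * 2 ^ (n - 1) - 2) }) :
    (∀ x y : PresentedGroup rels, x * y = y * x) ∧
      Nonempty (PresentedGroup rels ≃* Multiplicative (ZMod (2 ^ (n + 1)) × ZMod 2)) :=
  stmt_3_general n a c hc hca rels hrels
end

section
/- In the group presented by ⟨D₁, D₂, D₃, D₄ : D₁^{2^{n+1}} = D₂^{2^{n+1}} = D₃^{2^n} = D₄² = 1, D₁D₂D₃D₄ = 1, D₁² = D₂², D₃ = D₁^{3·2^{n−1}c − 2}⟩ with c odd, the relation D₂D₁ = D₁^{2^n + 1}D₂ holds, and hence the group is isomorphic to the semidirect product ℤ/2^{n+1}ℤ ⋊ ℤ/2ℤ where the action sends the generator to its (2^n+1)-th power. -/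
/-!
Write `a, b, r, s` for the images of `D₁, D₂, D₃, D₄` and `m = 3 · 2^(n-1) c - 2`. Since
`s = (a b a^m)⁻¹` is an involution, so is its conjugate `a^(m+1) b`. Conjugation by `b` fixes
`a² = b²`, so `b a b⁻¹` is determined by its odd power `(b a b⁻¹)^(m+1) = b a^(m+1) b⁻¹`,
which the involution computes as `a^(-(m+1)-2)`. Hence `b a b⁻¹ = a^(-(2m+3))`, and
`-(2m+3) = 1 - 3 · 2^n c ≡ 2^n + 1 (mod 2^(n+1))` because `c` is odd.

Conversely, in `ℤ/2^(n+1) ⋊ ℤ/2` the elements `a = (1, 0)` and `b = (2^(n-1) + 1, 1)` satisfy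
all relations, and `t = a^(-(2^(n-1)+1)) b` is an involution acting on `a` by the
`(2^n+1)`-th power, so the two homomorphisms defined on generators are mutually inverse.
-/

open Multiplicative SemidirectProduct

section ZModLift

variable {G : Type*} [Group G] {M : ℕ}

noncomputable def zmodPowHom (a : G) (ha : a ^ M = 1) : Multiplicative (ZMod M) →* G :=
  AddMonoidHom.toMultiplicativeLeft <| ZMod.lift M
    ⟨zmultiplesHom (Additive G) (Additive.ofMul a), by simp [← ofMul_pow, ha]⟩

@[simp]
lemma zmodPowHom_ofAdd_intCast (a : G) (ha : a ^ M = 1) (z : ℤ) :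
    zmodPowHom a ha (ofAdd (z : ZMod M)) = a ^ z := by
  simp [zmodPowHom, ZMod.lift_coe, ← ofMul_zpow]

@[simp]
lemma zmodPowHom_ofAdd_one (a : G) (ha : a ^ M = 1) : zmodPowHom a ha (ofAdd 1) = a := by
  simpa using zmodPowHom_ofAdd_intCast a ha 1

lemma MonoidHom.ext_zmod {f g : Multiplicative (ZMod M) →* G}
    (h : f (ofAdd 1) = g (ofAdd 1)) : f = g := by
  refine MonoidHom.ext fun x => ?_
  obtain ⟨z, hz⟩ := ZMod.intCast_surjective x.toAdd
  have hx : x = ofAdd (1 : ZMod M) ^ z := by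
    rw [← ofAdd_zsmul, zsmul_one, hz, ofAdd_toAdd]
  rw [hx, map_zpow, map_zpow, h]

end ZModLift

section Conjugation

variable {G : Type*} [Group G] {a b : G}

lemma zpow_eq_zpow_of_dvd_sub {M : ℕ} (ha : a ^ M = 1) {i j : ℤ} (h : (M : ℤ) ∣ i - j) :
    a ^ i = a ^ j := by
  obtain ⟨t, ht⟩ := h
  rw [show i = j + M * t by linarith, zpow_add, zpow_mul, zpow_natCast, ha, one_zpow, mul_one]

lemma zpow_mul_conj_eq_of_conj_eq {e : ℕ} (h : b * a * b⁻¹ = a ^ e) (j : ℤ) :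
    a ^ j * b * a * (a ^ j * b)⁻¹ = a ^ e := by
  calc a ^ j * b * a * (a ^ j * b)⁻¹ = a ^ j * (b * a * b⁻¹) * a ^ (-j) := by group
    _ = a ^ e := by rw [h, ← zpow_natCast, ← zpow_add, ← zpow_add]; congr 1; ring

lemma zpow_mul_sq_of_conj_eq {e s : ℕ} (h : b * a * b⁻¹ = a ^ e) (hb : b ^ 2 = a ^ s)
    (j : ℤ) : (a ^ j * b) ^ 2 = a ^ (((e : ℤ) + 1) * j + s) := by
  calc (a ^ j * b) ^ 2 = a ^ j * (b * a * b⁻¹) ^ j * b ^ 2 := by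
        rw [conj_zpow, pow_two, pow_two]; group
    _ = a ^ (((e : ℤ) + 1) * j + s) := by
      rw [h, hb, ← zpow_natCast, ← zpow_natCast, ← zpow_mul, ← zpow_add, ← zpow_add]
      congr 1; ring

lemma conj_eq_zpow_of_zpow_mul_sq_eq_one {k : ℤ} (hk : Odd k) (hab : b ^ 2 = a ^ 2)
    (h : (a ^ k * b) ^ 2 = 1) : b * a * b⁻¹ = a ^ (-(2 * k + 1)) := by
  have hsq : (b * a * b⁻¹) ^ (2 : ℤ) = a ^ (2 : ℤ) := by
    rw [conj_zpow, zpow_two, ← pow_two, ← hab]; group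
  have hpow : (b * a * b⁻¹) ^ k = a ^ (-k - 2) := by
    calc (b * a * b⁻¹) ^ k = a ^ (-k) * (a ^ k * b) ^ 2 * (b ^ 2)⁻¹ := by
          rw [conj_zpow, pow_two, pow_two]; group
      _ = a ^ (-k - 2) := by rw [h, hab]; group
  obtain ⟨q, rfl⟩ := hk
  calc b * a * b⁻¹ = (b * a * b⁻¹) ^ (2 * q + 1) * ((b * a * b⁻¹) ^ (2 : ℤ)) ^ (-q) := by
        rw [← zpow_mul, ← zpow_add]; group
    _ = a ^ (-(2 * (2 * q + 1) + 1)) := by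
        rw [hpow, hsq, ← zpow_mul, ← zpow_add]; congr 1; ring

end Conjugation

section SemidirectProduct

variable {G : Type*} [Group G] {M e : ℕ}
  {φ : Multiplicative (ZMod 2) →* MulAut (Multiplicative (ZMod M))}

lemma inl_ofAdd_one_pow_eq_one :
    (inl (ofAdd 1) : Multiplicative (ZMod M) ⋊[φ] Multiplicative (ZMod 2)) ^ M = 1 := by
  rw [← map_pow, ← ofAdd_nsmul, nsmul_one, ZMod.natCast_self, ofAdd_zero, map_one]

lemma inr_ofAdd_one_sq :
    (inr (ofAdd 1) : Multiplicative (ZMod M) ⋊[φ] Multiplicative (ZMod 2)) ^ 2 = 1 := by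
  rw [← map_pow, show (ofAdd 1 : Multiplicative (ZMod 2)) ^ 2 = 1 by decide, map_one]

lemma inr_mul_inl_mul_inr_inv (hφ : ∀ x, φ (ofAdd 1) x = x ^ e) :
    (inr (ofAdd 1) * inl (ofAdd 1) * (inr (ofAdd 1))⁻¹ :
      Multiplicative (ZMod M) ⋊[φ] Multiplicative (ZMod 2)) = inl (ofAdd 1) ^ e := by
  rw [← map_inv, ← inl_aut, hφ, map_pow]

lemma SemidirectProduct.hom_ext_zmod
    {f g : Multiplicative (ZMod M) ⋊[φ] Multiplicative (ZMod 2) →* G}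
    (hl : f (inl (ofAdd 1)) = g (inl (ofAdd 1))) (hr : f (inr (ofAdd 1)) = g (inr (ofAdd 1))) :
    f = g :=
  SemidirectProduct.hom_ext (MonoidHom.ext_zmod hl) (MonoidHom.ext_zmod hr)

noncomputable def SemidirectProduct.liftZMod (hφ : ∀ x, φ (ofAdd 1) x = x ^ e) (a t : G)
    (ha : a ^ M = 1) (ht : t ^ 2 = 1) (hta : t * a * t⁻¹ = a ^ e) :
    Multiplicative (ZMod M) ⋊[φ] Multiplicative (ZMod 2) →* G :=
  SemidirectProduct.lift (zmodPowHom a ha) (zmodPowHom t ht) fun g => by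
    obtain rfl | rfl : g = 1 ∨ g = ofAdd 1 := by decide +revert
    · exact MonoidHom.ext_zmod (by simp)
    · exact MonoidHom.ext_zmod (by simp [hφ, hta])

@[simp]
lemma SemidirectProduct.liftZMod_inl (hφ : ∀ x, φ (ofAdd 1) x = x ^ e) (a t : G)
    (ha : a ^ M = 1) (ht : t ^ 2 = 1) (hta : t * a * t⁻¹ = a ^ e) :
    liftZMod hφ a t ha ht hta (inl (ofAdd 1)) = a := by
  simp [liftZMod]

@[simp]
lemma SemidirectProduct.liftZMod_inr (hφ : ∀ x, φ (ofAdd 1) x = x ^ e) (a t : G)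
    (ha : a ^ M = 1) (ht : t ^ 2 = 1) (hta : t * a * t⁻¹ = a ^ e) :
    liftZMod hφ a t ha ht hta (inr (ofAdd 1)) = t := by
  simp [liftZMod]

end SemidirectProduct

lemma PresentedGroup.lift_of_eq_one {α : Type*} {rels : Set (FreeGroup α)} :
    ∀ w ∈ rels, FreeGroup.lift (PresentedGroup.of (rels := rels)) w = 1 := by
  intro w hw
  rw [show FreeGroup.lift PresentedGroup.of = PresentedGroup.mk rels from
    FreeGroup.ext_hom _ _ fun _ => rfl]
  exact PresentedGroup.one_of_mem hw

section Exponents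

variable {n c : ℕ}

def relatorExponent (n c : ℕ) : ℕ := 3 * 2 ^ (n - 1) * c - 2

lemma odd_relatorExponent_add_one (hn : 2 ≤ n) (hc : Odd c) :
    Odd ((relatorExponent n c : ℤ) + 1) := by
  obtain ⟨p, rfl⟩ : ∃ p, n = p + 2 := ⟨n - 2, by omega⟩
  obtain ⟨v, rfl⟩ := hc
  have h2 : 2 ≤ 3 * 2 ^ (p + 1) * (2 * v + 1) := by
    have := Nat.one_le_two_pow (n := p + 1); nlinarith
  refine ⟨3 * 2 ^ p * (2 * v + 1) - 1, ?_⟩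
  rw [relatorExponent, show p + 2 - 1 = p + 1 by omega]
  push_cast [h2]
  ring

lemma two_pow_succ_dvd_relatorExponent (hn : 2 ≤ n) (hc : Odd c) :
    (2 : ℤ) ^ (n + 1) ∣ 2 * ((relatorExponent n c : ℤ) + 1) + 2 ^ n + 2 := by
  obtain ⟨p, rfl⟩ : ∃ p, n = p + 2 := ⟨n - 2, by omega⟩
  obtain ⟨v, rfl⟩ := hc
  have h2 : 2 ≤ 3 * 2 ^ (p + 1) * (2 * v + 1) := by
    have := Nat.one_le_two_pow (n := p + 1); nlinarith
  refine ⟨3 * v + 2, ?_⟩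
  rw [relatorExponent, show p + 2 - 1 = p + 1 by omega]
  push_cast [h2]
  ring

lemma two_pow_succ_dvd_two_pow_mul {x : ℤ} (hx : Even x) : (2 : ℤ) ^ (n + 1) ∣ 2 ^ n * x := by
  obtain ⟨y, rfl⟩ := hx
  exact ⟨y, by ring⟩

lemma two_pow_succ_dvd_mul_two_pow_pred_add_one (hn : 2 ≤ n) :
    (2 : ℤ) ^ (n + 1) ∣ (2 ^ n + 1 + 1) * (2 ^ (n - 1) + 1) - 2 := by
  obtain ⟨p, rfl⟩ : ∃ p, n = p + 2 := ⟨n - 2, by omega⟩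
  refine ⟨2 ^ p + 1, ?_⟩
  rw [show p + 2 - 1 = p + 1 by omega]
  ring

end Exponents

section Relators

variable {H : Type*} [Group H] {n c : ℕ}

def relators (n c : ℕ) : Set (FreeGroup (Fin 4)) :=
  { FreeGroup.of 0 ^ (2 ^ (n + 1)),
    FreeGroup.of 1 ^ (2 ^ (n + 1)),
    FreeGroup.of 2 ^ (2 ^ n),
    FreeGroup.of 3 ^ 2,
    FreeGroup.of 0 * FreeGroup.of 1 * FreeGroup.of 2 * FreeGroup.of 3,
    FreeGroup.of 0 ^ 2 * (FreeGroup.of 1 ^ 2)⁻¹,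
    (FreeGroup.of 2)⁻¹ * FreeGroup.of 0 ^ relatorExponent n c }

lemma forall_lift_relators_eq_one_iff (x : Fin 4 → H) :
    (∀ w ∈ relators n c, FreeGroup.lift x w = 1) ↔
      x 0 ^ 2 ^ (n + 1) = 1 ∧ x 1 ^ 2 ^ (n + 1) = 1 ∧ x 2 ^ 2 ^ n = 1 ∧ x 3 ^ 2 = 1 ∧
        x 0 * x 1 * x 2 * x 3 = 1 ∧ x 0 ^ 2 = x 1 ^ 2 ∧ x 2 = x 0 ^ relatorExponent n c := by
  simp [relators, mul_inv_eq_one, inv_mul_eq_one]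

lemma conj_eq_of_forall_lift_relators_eq_one (hn : 2 ≤ n) (hc : Odd c) {x : Fin 4 → H}
    (hx : ∀ w ∈ relators n c, FreeGroup.lift x w = 1) :
    x 1 * x 0 * (x 1)⁻¹ = x 0 ^ (2 ^ n + 1) := by
  obtain ⟨ha, -, -, hs, habrs, hab, hr⟩ := (forall_lift_relators_eq_one_iff x).mp hx
  set m := relatorExponent n c
  have hsq : (x 0 ^ ((m : ℤ) + 1) * x 1) ^ 2 = 1 := by
    calc (x 0 ^ ((m : ℤ) + 1) * x 1) ^ 2
          = x 0 ^ m * (x 0 * x 1 * x 0 ^ m) ^ 2 * (x 0 ^ m)⁻¹ := by rw [pow_two, pow_two]; group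
      _ = 1 := by rw [← hr, eq_inv_of_mul_eq_one_left habrs, inv_pow, hs]; group
  rw [conj_eq_zpow_of_zpow_mul_sq_eq_one (odd_relatorExponent_add_one hn hc) hab.symm hsq,
    ← zpow_natCast]
  refine zpow_eq_zpow_of_dvd_sub ha ?_
  push_cast
  exact (dvd_neg.mpr (two_pow_succ_dvd_relatorExponent hn hc)).trans (dvd_of_eq (by ring))

lemma forall_lift_relators_eq_one_of_conj_eq (hn : 2 ≤ n) (hc : Odd c) {a b : H}
    (ha : a ^ 2 ^ (n + 1) = 1) (hab : b ^ 2 = a ^ 2) (hba : b * a * b⁻¹ = a ^ (2 ^ n + 1)) :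
    ∀ w ∈ relators n c, FreeGroup.lift
      ![a, b, a ^ relatorExponent n c, (a * b * a ^ relatorExponent n c)⁻¹] w = 1 := by
  set m := relatorExponent n c
  have hm : Even (m : ℤ) := by simpa using (odd_relatorExponent_add_one hn hc).sub_odd odd_one
  rw [forall_lift_relators_eq_one_iff]
  simp only [Matrix.cons_val]
  refine ⟨ha, ?_, ?_, ?_, mul_inv_cancel _, hab.symm, rfl⟩
  · rw [pow_succ', pow_mul, hab, ← pow_mul, ← pow_succ', ha]
  · rw [← pow_mul, ← zpow_natCast, ← zpow_zero a]
    refine zpow_eq_zpow_of_dvd_sub ha ?_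
    push_cast
    simpa [mul_comm] using two_pow_succ_dvd_two_pow_mul (n := n) hm
  · have hsq : (a ^ ((m : ℤ) + 1) * b) ^ 2 = 1 := by
      rw [zpow_mul_sq_of_conj_eq hba hab, ← zpow_zero a]
      refine zpow_eq_zpow_of_dvd_sub ha ?_
      push_cast
      exact ((two_pow_succ_dvd_relatorExponent hn hc).add
        (two_pow_succ_dvd_two_pow_mul hm)).trans (dvd_of_eq (by ring))
    rw [inv_pow, inv_eq_one]
    calc (a * b * a ^ m) ^ 2 = a ^ (-(m : ℤ)) * (a ^ ((m : ℤ) + 1) * b) ^ 2 * a ^ m := by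
          rw [pow_two, pow_two]; group
      _ = 1 := by rw [hsq]; group

lemma relators_of_conj (hn : 2 ≤ n) (hc : Odd c) :
    (PresentedGroup.of 1 : PresentedGroup (relators n c)) * .of 0 * (.of 1)⁻¹ =
      .of 0 ^ (2 ^ n + 1) :=
  conj_eq_of_forall_lift_relators_eq_one hn hc PresentedGroup.lift_of_eq_one

end Relators

section Equiv

variable {n c : ℕ}
  {φ : Multiplicative (ZMod 2) →* MulAut (Multiplicative (ZMod (2 ^ (n + 1))))}

lemma inl_zpow_mul_inr_sq (hn : 2 ≤ n) (hφ : ∀ x, φ (ofAdd 1) x = x ^ (2 ^ n + 1)) :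
    (inl (ofAdd 1) ^ ((2 : ℤ) ^ (n - 1) + 1) * inr (ofAdd 1) :
      Multiplicative (ZMod (2 ^ (n + 1))) ⋊[φ] Multiplicative (ZMod 2)) ^ 2 =
      inl (ofAdd 1) ^ 2 := by
  rw [zpow_mul_sq_of_conj_eq (inr_mul_inl_mul_inr_inv hφ) (s := 0)
    (by rw [inr_ofAdd_one_sq, pow_zero]), ← zpow_natCast]
  refine zpow_eq_zpow_of_dvd_sub inl_ofAdd_one_pow_eq_one ?_
  push_cast
  simpa using two_pow_succ_dvd_mul_two_pow_pred_add_one hn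

lemma relators_of_zpow_mul_of_sq (hn : 2 ≤ n) (hc : Odd c) :
    ((PresentedGroup.of 0 : PresentedGroup (relators n c)) ^ (-((2 : ℤ) ^ (n - 1) + 1)) *
      PresentedGroup.of 1) ^ 2 = 1 := by
  obtain ⟨ha, -, -, -, -, hab, -⟩ :=
    (forall_lift_relators_eq_one_iff _).mp (PresentedGroup.lift_of_eq_one (rels := relators n c))
  rw [zpow_mul_sq_of_conj_eq (relators_of_conj hn hc) hab.symm, ← zpow_zero (PresentedGroup.of 0)]
  refine zpow_eq_zpow_of_dvd_sub ha ?_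
  push_cast
  exact (dvd_neg.mpr (two_pow_succ_dvd_mul_two_pow_pred_add_one hn)).trans (dvd_of_eq (by ring))

noncomputable def relatorsToSemidirect (hn : 2 ≤ n) (hc : Odd c)
    (hφ : ∀ x, φ (ofAdd 1) x = x ^ (2 ^ n + 1)) :
    PresentedGroup (relators n c) →*
      Multiplicative (ZMod (2 ^ (n + 1))) ⋊[φ] Multiplicative (ZMod 2) :=
  PresentedGroup.toGroup (forall_lift_relators_eq_one_of_conj_eq hn hc inl_ofAdd_one_pow_eq_one
    (inl_zpow_mul_inr_sq hn hφ) (zpow_mul_conj_eq_of_conj_eq (inr_mul_inl_mul_inr_inv hφ) _))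

noncomputable def semidirectToRelators (hn : 2 ≤ n) (hc : Odd c)
    (hφ : ∀ x, φ (ofAdd 1) x = x ^ (2 ^ n + 1)) :
    Multiplicative (ZMod (2 ^ (n + 1))) ⋊[φ] Multiplicative (ZMod 2) →*
      PresentedGroup (relators n c) :=
  SemidirectProduct.liftZMod hφ (.of 0) _
    ((forall_lift_relators_eq_one_iff _).mp PresentedGroup.lift_of_eq_one).1
    (relators_of_zpow_mul_of_sq hn hc)
    (zpow_mul_conj_eq_of_conj_eq (relators_of_conj hn hc) _)

noncomputable def relatorsEquiv (hn : 2 ≤ n) (hc : Odd c)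
    (hφ : ∀ x, φ (ofAdd 1) x = x ^ (2 ^ n + 1)) :
    PresentedGroup (relators n c) ≃*
      Multiplicative (ZMod (2 ^ (n + 1))) ⋊[φ] Multiplicative (ZMod 2) :=
  MonoidHom.toMulEquiv (relatorsToSemidirect hn hc hφ) (semidirectToRelators hn hc hφ)
    (by
      obtain ⟨-, -, -, -, habrs, -, hr⟩ :=
        (forall_lift_relators_eq_one_iff _).mp
          (PresentedGroup.lift_of_eq_one (rels := relators n c))
      refine PresentedGroup.ext fun i => ?_
      fin_cases i <;> simp [relatorsToSemidirect, semidirectToRelators, PresentedGroup.toGroup.of]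
      · group
      · exact hr.symm
      · rw [eq_inv_of_mul_eq_one_right habrs, hr]; group)
    (SemidirectProduct.hom_ext_zmod
      (by simp [relatorsToSemidirect, semidirectToRelators, PresentedGroup.toGroup.of])
      (by simp [relatorsToSemidirect, semidirectToRelators, PresentedGroup.toGroup.of]; group))

end Equiv

theorem stmt_4 (n c : ℕ) (hn : 3 < n) (hc : Odd c)
    (rels : Set (FreeGroup (Fin 4)))
    (hrels : rels =
      { FreeGroup.of 0 ^ (2 ^ (n + 1)),
        FreeGroup.of 1 ^ (2 ^ (n + 1)),
        FreeGroup.of 2 ^ (2 ^ n),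
        FreeGroup.of 3 ^ 2,
        FreeGroup.of 0 * FreeGroup.of 1 * FreeGroup.of 2 * FreeGroup.of 3,
        FreeGroup.of 0 ^ 2 * (FreeGroup.of 1 ^ 2)⁻¹,
        (FreeGroup.of 2)⁻¹ * FreeGroup.of 0 ^ (3 * 2 ^ (n - 1) * c - 2) }) :
    (PresentedGroup.of (rels := rels) 1 * PresentedGroup.of 0 =
        PresentedGroup.of 0 ^ (2 ^ n + 1) * PresentedGroup.of 1) ∧
    ∀ φ : Multiplicative (ZMod 2) →* MulAut (Multiplicative (ZMod (2 ^ (n + 1)))),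
      (∀ x : Multiplicative (ZMod (2 ^ (n + 1))),
          φ (Multiplicative.ofAdd 1) x = x ^ (2 ^ n + 1)) →
      Nonempty (PresentedGroup rels ≃*
        (Multiplicative (ZMod (2 ^ (n + 1))) ⋊[φ] Multiplicative (ZMod 2))) := by
  obtain rfl : rels = relators n c := hrels
  have hn : 2 ≤ n := by omega
  exact ⟨mul_inv_eq_iff_eq_mul.mp (relators_of_conj hn hc),
    fun _ hφ => ⟨relatorsEquiv hn hc hφ⟩⟩
end

section
/- The tuple (a, −3a−4, 2a, 2, 2) in ℤ/2^{n+1}ℤ, with a odd, is a generating vector of type (0; 2^{n+1}, 2^{n+1}, 2^n, 2^n, 2^n): a generates ℤ/2^{n+1}ℤ, −3a−4 has order 2^{n+1}, each of 2a, 2, 2 has order 2^n, and the sum a + (−3a−4) + 2a + 2 + 2 ≡ 0 (mod 2^{n+1}). -/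
/-! An odd residue is coprime to `2^{n+1}`, so it has order `2^{n+1}` and generates `ℤ/2^{n+1}ℤ`;
this applies to `a` and to `-3a - 4 = -(3a + 4)`. Doubling an element of order `2^{n+1}` halves its
order, which gives the orders of `2a` and of `2 = 2 • 1`. -/

theorem AddSubgroup.closure_singleton_eq_top_of_addOrderOf_eq_card {G : Type*} [AddGroup G]
    [Finite G] {x : G} (h : addOrderOf x = Nat.card G) : closure {x} = ⊤ := by
  rw [← zmultiples_eq_closure, ← card_eq_iff_eq_top, Nat.card_zmultiples, h]

theorem addOrderOf_two_nsmul_of_addOrderOf_eq_two_pow {G : Type*} [AddMonoid G] {x : G} {n : ℕ}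
    (h : addOrderOf x = 2 ^ (n + 1)) : addOrderOf (2 • x) = 2 ^ n := by
  rw [addOrderOf_nsmul_of_dvd two_ne_zero (h ▸ dvd_pow_self 2 n.succ_ne_zero), h,
    pow_succ, Nat.mul_div_cancel _ two_pos]

namespace ZMod

theorem addOrderOf_natCast_of_coprime {N m : ℕ} [NeZero N] (h : N.Coprime m) :
    addOrderOf (m : ZMod N) = N := by
  rw [addOrderOf_coe m (NeZero.ne N), h.gcd_eq_one, Nat.div_one]

theorem addOrderOf_natCast_of_odd {k m : ℕ} (hm : Odd m) :
    addOrderOf (m : ZMod (2 ^ k)) = 2 ^ k :=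
  addOrderOf_natCast_of_coprime ((Nat.coprime_two_left.mpr hm).pow_left k)

end ZMod

theorem stmt_12_general (n a : ℕ) (ha : Odd a) :
    AddSubgroup.closure {(a : ZMod (2 ^ (n + 1)))} = ⊤ ∧
    addOrderOf (a : ZMod (2 ^ (n + 1))) = 2 ^ (n + 1) ∧
    addOrderOf (-3 * (a : ZMod (2 ^ (n + 1))) - 4) = 2 ^ (n + 1) ∧
    addOrderOf (2 * (a : ZMod (2 ^ (n + 1)))) = 2 ^ n ∧
    addOrderOf (2 : ZMod (2 ^ (n + 1))) = 2 ^ n ∧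
    (a : ZMod (2 ^ (n + 1))) + (-3 * (a : ZMod (2 ^ (n + 1))) - 4) +
        2 * (a : ZMod (2 ^ (n + 1))) + 2 + 2 = 0 := by
  have h_a : addOrderOf (a : ZMod (2 ^ (n + 1))) = 2 ^ (n + 1) :=
    ZMod.addOrderOf_natCast_of_odd ha
  have h_neg : -3 * (a : ZMod (2 ^ (n + 1))) - 4 = -((3 * a + 4 : ℕ) : ZMod (2 ^ (n + 1))) := by
    push_cast; ring
  have h_odd : Odd (3 * a + 4) := (Nat.odd_mul.mpr ⟨by decide, ha⟩).add_even (by decide)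
  refine ⟨?_, h_a, ?_, ?_, ?_, by ring⟩
  · exact AddSubgroup.closure_singleton_eq_top_of_addOrderOf_eq_card (by rw [h_a, Nat.card_zmod])
  · rw [h_neg, addOrderOf_neg, ZMod.addOrderOf_natCast_of_odd h_odd]
  · rw [two_mul, ← two_nsmul]
    exact addOrderOf_two_nsmul_of_addOrderOf_eq_two_pow h_a
  · rw [show (2 : ZMod (2 ^ (n + 1))) = 2 • 1 by rw [two_nsmul, one_add_one_eq_two]]
    exact addOrderOf_two_nsmul_of_addOrderOf_eq_two_pow (ZMod.addOrderOf_one _)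

theorem stmt_12 (n a : ℕ) (hn : 1 ≤ n) (ha : Odd a) :
    AddSubgroup.closure {(a : ZMod (2 ^ (n + 1)))} = ⊤ ∧
    addOrderOf (a : ZMod (2 ^ (n + 1))) = 2 ^ (n + 1) ∧
    addOrderOf (-3 * (a : ZMod (2 ^ (n + 1))) - 4) = 2 ^ (n + 1) ∧
    addOrderOf (2 * (a : ZMod (2 ^ (n + 1)))) = 2 ^ n ∧
    addOrderOf (2 : ZMod (2 ^ (n + 1))) = 2 ^ n ∧
    (a : ZMod (2 ^ (n + 1))) + (-3 * (a : ZMod (2 ^ (n + 1))) - 4) +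
        2 * (a : ZMod (2 ^ (n + 1))) + 2 + 2 = 0 :=
  stmt_12_general n a ha
end
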